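/- arXiv:2008.04597 — 11 statements merged into one kernel-verified Lean document; each statement's English description precedes it below -/
import Mathlib

section
/- Let (A, μ, α, β) be a BiHom-associative algebra with α and β bijective algebra homomorphisms. Define {x,y} = μ(x,y) − μ(α⁻¹β(y), αβ⁻¹(x)). Then the bracket is BiHom-skew-symmetric: {β(x), α(y)} = −{β(y), α(x)} for all x, y ∈ A. -/
/-- BiHom-associative algebra : vector space A over field K (char 0), bilinear μ,
bijective commuting algebra homomorphisms α, β. Bracket {x,y} = μ(x,y) − μ(α⁻¹β(y), αβ⁻¹(x)). -/
theorem stmt_1 {K A : Type*} [Field K] [CharZero K] [AddCommGroup A] [Module K A]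
    (μ : A →ₗ[K] A →ₗ[K] A) (α β : A ≃ₗ[K] A)
    (hcomm : ∀ x, α (β x) = β (α x))
    (hα : ∀ x y, α (μ x y) = μ (α x) (α y))
    (hβ : ∀ x y, β (μ x y) = μ (β x) (β y))
    (hassoc : ∀ x y z, μ (α x) (μ y z) = μ (μ x y) (β z))
    (br : A → A → A)
    (hbr : ∀ x y, br x y = μ x y - μ (α.symm (β y)) (α (β.symm x))) :
    ∀ x y, br (β x) (α y) = - br (β y) (α x) := by
  intro x y
  have h1 : ∀ z, α.symm (β (α z)) = β z := fun z => by
    rw [← hcomm]; exact α.symm_apply_apply _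
  have h2 : ∀ z, β.symm (β z) = z := fun z => β.symm_apply_apply z
  rw [hbr, hbr, h1, h2, h1, h2]
  abel
end

section
/- Let (A, μ, α, β) be a BiHom-associative algebra with α and β bijective algebra homomorphisms. Define {x,y} = μ(x,y) − μ(α⁻¹β(y), αβ⁻¹(x)). Then the bracket satisfies the BiHom-Jacobi identity: the cyclic sum over (x,y,z) of {β²(x), {β(y), α(z)}} equals zero, for all x, y, z ∈ A. -/
/-- BiHom-associative algebra : vector space A over field K (char 0), bilinear μ,
bijective commuting algebra homomorphisms α, β. Bracket {x,y} = μ(x,y) − μ(α⁻¹β(y), αβ⁻¹(x)). -/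
theorem stmt_2 {K A : Type*} [Field K] [CharZero K] [AddCommGroup A] [Module K A]
    (μ : A →ₗ[K] A →ₗ[K] A) (α β : A ≃ₗ[K] A)
    (hcomm : ∀ x, α (β x) = β (α x))
    (hα : ∀ x y, α (μ x y) = μ (α x) (α y))
    (hβ : ∀ x y, β (μ x y) = μ (β x) (β y))
    (hassoc : ∀ x y z, μ (α x) (μ y z) = μ (μ x y) (β z))
    (br : A → A → A)
    (hbr : ∀ x y, br x y = μ x y - μ (α.symm (β y)) (α (β.symm x))) :
    ∀ x y z, br (β (β x)) (br (β y) (α z)) + br (β (β y)) (br (β z) (α x)) + br (β (β z)) (br (β x) (α y)) = 0 := by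
  have hα' : ∀ u v, α.symm (μ u v) = μ (α.symm u) (α.symm v) := by
    intro u v; apply α.injective; rw [hα]; simp
  have hβ' : ∀ u v, β.symm (μ u v) = μ (β.symm u) (β.symm v) := by
    intro u v; apply β.injective; rw [hβ]; simp
  have c2 : ∀ x, α (β.symm x) = β.symm (α x) := by
    intro x; apply β.injective; rw [← hcomm]; simp
  have c3 : ∀ x, α.symm (β x) = β (α.symm x) := by
    intro x; apply α.injective; rw [hcomm]; simp
  have c4 : ∀ x, α.symm (β.symm x) = β.symm (α.symm x) := by
    intro x; apply α.injective; rw [c2]; simp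
  have hassoc' : ∀ p q r, μ p (μ q r) = μ (μ (α.symm p) q) (β r) := by
    intro p q r
    conv_lhs => rw [show p = α (α.symm p) by simp]
    rw [hassoc]
  intro x y z
  simp only [hbr, map_sub, LinearMap.sub_apply, LinearMap.map_sub,
    hα', hβ', c2, c3, c4, LinearEquiv.symm_apply_apply, LinearEquiv.apply_symm_apply,
    hcomm, hα, hβ, hassoc']
  abel
end

section
/- Let (A, μ, α, β) be a BiHom-associative algebra with α and β bijective algebra homomorphisms. Define {x,y} = μ(x,y) − μ(α⁻¹β(y), αβ⁻¹(x)). Then the BiHom-Leibniz identity holds: {μ(x,y), αβ(z)} = μ({x, β(z)}, α(y)) + μ(α(x), {y, α(z)}) for all x, y, z ∈ A. -/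
/-- BiHom-associative algebra : vector space A over field K (char 0), bilinear μ,
bijective commuting algebra homomorphisms α, β. Bracket {x,y} = μ(x,y) − μ(α⁻¹β(y), αβ⁻¹(x)). -/
theorem stmt_3 {K A : Type*} [Field K] [CharZero K] [AddCommGroup A] [Module K A]
    (μ : A →ₗ[K] A →ₗ[K] A) (α β : A ≃ₗ[K] A)
    (hcomm : ∀ x, α (β x) = β (α x))
    (hα : ∀ x y, α (μ x y) = μ (α x) (α y))
    (hβ : ∀ x y, β (μ x y) = μ (β x) (β y))
    (hassoc : ∀ x y z, μ (α x) (μ y z) = μ (μ x y) (β z))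
    (br : A → A → A)
    (hbr : ∀ x y, br x y = μ x y - μ (α.symm (β y)) (α (β.symm x))) :
    ∀ x y z, br (μ x y) (α (β z)) = μ (br x (β z)) (α y) + μ (α x) (br y (α z)) := by
  intro x y z
  have hβs : ∀ a b, β.symm (μ a b) = μ (β.symm a) (β.symm b) := by
    intro a b; apply β.injective; simp [hβ]
  have hc1 : ∀ a, α.symm (β a) = β (α.symm a) := by
    intro a; apply α.injective; simp [hcomm]
  have hc2 : ∀ a, β.symm (α a) = α (β.symm a) := by
    intro a; apply β.injective; simp [← hcomm]
  simp only [hbr, hβs, map_sub, LinearMap.sub_apply]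
  -- simplify compositions
  have e0 : α.symm (β (α (β z))) = β (β z) := by
    rw [hcomm]; simp [hc1]
  have e1 : α (μ (β.symm x) (β.symm y)) = μ (α (β.symm x)) (α (β.symm y)) := hα _ _
  have e2 : α.symm (β (α z)) = β z := by rw [← hcomm]; simp
  have e3 : α.symm (β (β z)) = β (β (α.symm z)) := by rw [hc1, hc1]
  rw [e0, e1, e2]
  -- key associativity facts
  have k1 : μ (α x) (μ y (α z)) = μ (μ x y) (α (β z)) := by
    rw [hassoc, ← hcomm]
  have k2 : μ (α x) (μ (β z) (α (β.symm y))) = μ (μ x (β z)) (α y) := by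
    rw [hassoc, ← hcomm]; simp
  have k3 : μ (β (β z)) (μ (α (β.symm x)) (α (β.symm y)))
      = μ (μ (α.symm (β (β z))) (α (β.symm x))) (α y) := by
    have : β (β z) = α (α.symm (β (β z))) := by simp
    rw [this, hassoc, ← hcomm]; simp
  rw [k1, k2, k3]
  abel
end

section
/- Let (A, {·,·}, μ) be a Poisson algebra and let α, β: A → A be two commuting Poisson algebra morphisms. Define {x,y}_{α,β} = {α(x), β(y)} and μ_{α,β}(x,y) = μ(α(x), β(y)). Then the twisted Leibniz identity holds: {μ_{α,β}(x,y), αβ(z)}_{α,β} = μ_{α,β}({x, β(z)}_{α,β}, α(y)) + μ_{α,β}(α(x), {y, α(z)}_{α,β}) for all x, y, z ∈ A. -/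
/-- Twisting a Poisson algebra by two commuting Poisson morphisms: the twisted
BiHom-Leibniz identity holds. -/
theorem stmt_4 {K A : Type*} [Field K] [CharZero K] [AddCommGroup A] [Module K A]
    (l μ : A →ₗ[K] A →ₗ[K] A)
    -- (A, l) is a Lie algebra
    (hskew : ∀ x y, l x y = - l y x)
    (hjac : ∀ x y z, l x (l y z) + l y (l z x) + l z (l x y) = 0)
    -- (A, μ) is a commutative associative algebra
    (hμcomm : ∀ x y, μ x y = μ y x)
    (hμassoc : ∀ x y z, μ (μ x y) z = μ x (μ y z))
    -- Leibniz rule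
    (hleib : ∀ x y z, l (μ x y) z = μ (l x z) y + μ x (l y z))
    -- α, β: commuting Poisson algebra morphisms
    (α β : A →ₗ[K] A)
    (hαβ : ∀ x, α (β x) = β (α x))
    (hαl : ∀ x y, α (l x y) = l (α x) (α y)) (hαμ : ∀ x y, α (μ x y) = μ (α x) (α y))
    (hβl : ∀ x y, β (l x y) = l (β x) (β y)) (hβμ : ∀ x y, β (μ x y) = μ (β x) (β y))
    -- twisted operations
    (lab μab : A → A → A)
    (hlab : ∀ x y, lab x y = l (α x) (β y))
    (hμab : ∀ x y, μab x y = μ (α x) (β y)) :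
    ∀ x y z, lab (μab x y) (α (β z)) = μab (lab x (β z)) (α y) + μab (α x) (lab y (α z)) := by
  intro x y z
  simp only [hlab, hμab, hαμ, hβl, hαl, hαβ]
  rw [hleib]
end

section
/- Let (A, {·,·}, μ) be a Poisson algebra and α, β: A → A two commuting Poisson algebra morphisms. Define {x,y}_{α,β} = {α(x), β(y)} and μ_{α,β}(x,y) = μ(α(x), β(y)). Then (A, {·,·}_{α,β}, μ_{α,β}, α, β) is a BiHom-Poisson algebra. -/
/-- Twisting a Poisson algebra by two commuting Poisson morphisms yields a
BiHom-Poisson algebra (A, {·,·}_{α,β}, μ_{α,β}, α, β). -/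
theorem stmt_5 {K A : Type*} [Field K] [CharZero K] [AddCommGroup A] [Module K A]
    (l μ : A →ₗ[K] A →ₗ[K] A)
    (hskew : ∀ x y, l x y = - l y x)
    (hjac : ∀ x y z, l x (l y z) + l y (l z x) + l z (l x y) = 0)
    (hμcomm : ∀ x y, μ x y = μ y x)
    (hμassoc : ∀ x y z, μ (μ x y) z = μ x (μ y z))
    (hleib : ∀ x y z, l (μ x y) z = μ (l x z) y + μ x (l y z))
    (α β : A →ₗ[K] A)
    (hαβ : ∀ x, α (β x) = β (α x))
    (hαl : ∀ x y, α (l x y) = l (α x) (α y)) (hαμ : ∀ x y, α (μ x y) = μ (α x) (α y))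
    (hβl : ∀ x y, β (l x y) = l (β x) (β y)) (hβμ : ∀ x y, β (μ x y) = μ (β x) (β y))
    (lab μab : A → A → A)
    (hlab : ∀ x y, lab x y = l (α x) (β y))
    (hμab : ∀ x y, μab x y = μ (α x) (β y)) :
    -- (A, lab, α, β) is a BiHom-Lie algebra
    (∀ x, α (β x) = β (α x)) ∧
    (∀ x y, α (lab x y) = lab (α x) (α y)) ∧
    (∀ x y, β (lab x y) = lab (β x) (β y)) ∧
    (∀ x y, lab (β x) (α y) = - lab (β y) (α x)) ∧
    (∀ x y z, lab (β (β x)) (lab (β y) (α z)) + lab (β (β y)) (lab (β z) (α x))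
        + lab (β (β z)) (lab (β x) (α y)) = 0) ∧
    -- (A, μab, α, β) is a BiHom-commutative BiHom-associative algebra
    (∀ x y, α (μab x y) = μab (α x) (α y)) ∧
    (∀ x y, β (μab x y) = μab (β x) (β y)) ∧
    (∀ x y z, μab (α x) (μab y z) = μab (μab x y) (β z)) ∧
    (∀ x y, μab (β x) (α y) = μab (β y) (α x)) ∧
    -- BiHom-Leibniz rule
    (∀ x y z, lab (μab x y) (α (β z)) = μab (lab x (β z)) (α y) + μab (α x) (lab y (α z))) := by
  refine ⟨hαβ, ?_, ?_, ?_, ?_, ?_, ?_, ?_, ?_, ?_⟩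
  · intro x y; simp only [hlab, hαl, hαβ]
  · intro x y; simp only [hlab, hβl, hαβ]
  · intro x y; simp only [hlab, hαβ]; rw [hskew]
  · intro x y z
    simp only [hlab, hβl, hαl, hαβ]
    exact hjac _ _ _
  · intro x y; simp only [hμab, hαμ, hαβ]
  · intro x y; simp only [hμab, hβμ, hαβ]
  · intro x y z
    simp only [hμab, hαμ, hβμ, hαβ]
    rw [hμassoc]
  · intro x y; simp only [hμab, hαβ]; rw [hμcomm]
  · intro x y z
    simp only [hlab, hμab, hαl, hβl, hαμ, hβμ, hαβ]
    rw [hleib]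
end

section
/- Let (A, {·,·}, μ, α, β) be a BiHom-Poisson algebra and let α', β': A → A be two BiHom-Poisson algebra morphisms such that any two of the maps α, β, α', β' commute. Define {x,y}' = {α'(x), β'(y)} and μ'(x,y) = μ(α'(x), β'(y)). Then (A, {·,·}', μ', α'α, β'β) is a BiHom-Poisson algebra. -/
/-- Twisting a BiHom-Poisson algebra (A,{·,·},μ,α,β) by two BiHom-Poisson algebra
morphisms α', β' (all four maps pairwise commuting) yields a BiHom-Poisson algebra
(A, {·,·}', μ', α'∘α, β'∘β). -/
theorem stmt_6 {K A : Type*} [Field K] [CharZero K] [AddCommGroup A] [Module K A]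
    (l μ : A →ₗ[K] A →ₗ[K] A) (α β : A →ₗ[K] A)
    -- BiHom-Poisson axioms for (l, μ, α, β)
    (hαβ : ∀ x, α (β x) = β (α x))
    (hαl : ∀ x y, α (l x y) = l (α x) (α y)) (hβl : ∀ x y, β (l x y) = l (β x) (β y))
    (hskew : ∀ x y, l (β x) (α y) = - l (β y) (α x))
    (hjac : ∀ x y z, l (β (β x)) (l (β y) (α z)) + l (β (β y)) (l (β z) (α x))
        + l (β (β z)) (l (β x) (α y)) = 0)
    (hαμ : ∀ x y, α (μ x y) = μ (α x) (α y)) (hβμ : ∀ x y, β (μ x y) = μ (β x) (β y))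
    (hassoc : ∀ x y z, μ (α x) (μ y z) = μ (μ x y) (β z))
    (hμcomm : ∀ x y, μ (β x) (α y) = μ (β y) (α x))
    (hleib : ∀ x y z, l (μ x y) (α (β z)) = μ (l x (β z)) (α y) + μ (α x) (l y (α z)))
    -- α', β' : BiHom-Poisson algebra morphisms
    (α' β' : A →ₗ[K] A)
    (hα'l : ∀ x y, α' (l x y) = l (α' x) (α' y)) (hα'μ : ∀ x y, α' (μ x y) = μ (α' x) (α' y))
    (hβ'l : ∀ x y, β' (l x y) = l (β' x) (β' y)) (hβ'μ : ∀ x y, β' (μ x y) = μ (β' x) (β' y))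
    -- any two of α, β, α', β' commute
    (hc1 : ∀ x, α' (α x) = α (α' x)) (hc2 : ∀ x, α' (β x) = β (α' x))
    (hc3 : ∀ x, β' (α x) = α (β' x)) (hc4 : ∀ x, β' (β x) = β (β' x))
    (hc5 : ∀ x, α' (β' x) = β' (α' x))
    -- twisted operations and structure maps
    (l' μ' : A → A → A) (αt βt : A → A)
    (hl' : ∀ x y, l' x y = l (α' x) (β' y))
    (hμ' : ∀ x y, μ' x y = μ (α' x) (β' y))
    (hαt : ∀ x, αt x = α' (α x)) (hβt : ∀ x, βt x = β' (β x)) :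
    -- (A, l', αt, βt) is a BiHom-Lie algebra
    (∀ x, αt (βt x) = βt (αt x)) ∧
    (∀ x y, αt (l' x y) = l' (αt x) (αt y)) ∧
    (∀ x y, βt (l' x y) = l' (βt x) (βt y)) ∧
    (∀ x y, l' (βt x) (αt y) = - l' (βt y) (αt x)) ∧
    (∀ x y z, l' (βt (βt x)) (l' (βt y) (αt z)) + l' (βt (βt y)) (l' (βt z) (αt x))
        + l' (βt (βt z)) (l' (βt x) (αt y)) = 0) ∧
    -- (A, μ', αt, βt) is a BiHom-commutative BiHom-associative algebra
    (∀ x y, αt (μ' x y) = μ' (αt x) (αt y)) ∧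
    (∀ x y, βt (μ' x y) = μ' (βt x) (βt y)) ∧
    (∀ x y z, μ' (αt x) (μ' y z) = μ' (μ' x y) (βt z)) ∧
    (∀ x y, μ' (βt x) (αt y) = μ' (βt y) (αt x)) ∧
    -- BiHom-Leibniz rule
    (∀ x y z, l' (μ' x y) (αt (βt z)) = μ' (l' x (βt z)) (αt y) + μ' (αt x) (l' y (αt z))) := by
  refine ⟨?_, ?_, ?_, ?_, ?_, ?_, ?_, ?_, ?_, ?_⟩ <;>
    intros <;>
    simp only [hl', hμ', hαt, hβt, hα'l, hβ'l, hα'μ, hβ'μ, hαl, hβl, hαμ, hβμ,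
      hc1, hc2, hc3, hc4, hc5, hαβ]
  · exact hskew _ _
  · exact hjac _ _ _
  · exact hassoc _ _ _
  · exact hμcomm _ _
  · rw [← hαβ]; exact hleib _ _ _
end

section
/- Let (A, μ, α, β) be a BiHom-commutative BiHom-associative algebra and (V, ρ, γ, ν) a representation of A with α and ν bijective. On A ⊕ V define α̃(x+a) = α(x)+γ(a), β̃(x+a) = β(x)+ν(a), and μ_{A⊕V}(x+a, y+b) = μ(x,y) + ρ(x)(b) + ρ(α⁻¹β(y))(γν⁻¹(a)). Then (A⊕V, μ_{A⊕V}, α̃, β̃) is a BiHom-commutative BiHom-associative algebra. -/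
/-- Semidirect product of a BiHom-commutative BiHom-associative algebra with a
representation (α and ν bijective) is a BiHom-commutative BiHom-associative algebra. -/
theorem stmt_10 {K A V : Type*} [Field K] [CharZero K]
    [AddCommGroup A] [Module K A] [AddCommGroup V] [Module K V]
    (μ : A →ₗ[K] A →ₗ[K] A) (α : A ≃ₗ[K] A) (β : A →ₗ[K] A)
    -- BiHom-commutative BiHom-associative axioms
    (hαβ : ∀ x, α (β x) = β (α x))
    (hαμ : ∀ x y, α (μ x y) = μ (α x) (α y)) (hβμ : ∀ x y, β (μ x y) = μ (β x) (β y))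
    (hassoc : ∀ x y z, μ (α x) (μ y z) = μ (μ x y) (β z))
    (hcomm : ∀ x y, μ (β x) (α y) = μ (β y) (α x))
    -- representation (V, ρ, γ, ν) with ν bijective
    (ρ : A →ₗ[K] V →ₗ[K] V) (γ : V →ₗ[K] V) (ν : V ≃ₗ[K] V)
    (hγν : ∀ a, γ (ν a) = ν (γ a))
    (h1 : ∀ x a, ρ (α x) (γ a) = γ (ρ x a))
    (h2 : ∀ x a, ρ (β x) (ν a) = ν (ρ x a))
    (h3 : ∀ x y a, ρ (μ x y) (ν a) = ρ (α x) (ρ y a))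
    -- semidirect product data on A ⊕ V
    (μP : A × V → A × V → A × V) (αt βt : A × V → A × V)
    (hμP : ∀ p q, μP p q = (μ p.1 q.1, ρ p.1 q.2 + ρ (α.symm (β q.1)) (γ (ν.symm p.2))))
    (hαt : ∀ p, αt p = (α p.1, γ p.2)) (hβt : ∀ p, βt p = (β p.1, ν p.2)) :
    (∀ p, αt (βt p) = βt (αt p)) ∧
    (∀ p q, αt (μP p q) = μP (αt p) (αt q)) ∧
    (∀ p q, βt (μP p q) = μP (βt p) (βt q)) ∧
    (∀ p q r, μP (αt p) (μP q r) = μP (μP p q) (βt r)) ∧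
    (∀ p q, μP (βt p) (αt q) = μP (βt q) (αt p)) := by

  have fab : ∀ x, α.symm (β x) = β (α.symm x) := by
    intro x
    apply α.injective
    rw [α.apply_symm_apply, hαβ, α.apply_symm_apply]
  have fam : ∀ x y, α.symm (μ x y) = μ (α.symm x) (α.symm y) := by
    intro x y
    apply α.injective
    rw [α.apply_symm_apply, hαμ, α.apply_symm_apply, α.apply_symm_apply]
  have fgn : ∀ v, ν.symm (γ v) = γ (ν.symm v) := by
    intro v
    apply ν.injective
    rw [ν.apply_symm_apply, ← hγν, ν.apply_symm_apply]
  have f2' : ∀ x v, ν.symm (ρ (β x) v) = ρ x (ν.symm v) := by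
    intro x v
    apply ν.injective
    rw [ν.apply_symm_apply, ← h2, ν.apply_symm_apply]
  have hswap : ∀ x y, μ (α.symm (β x)) y = μ (α.symm (β y)) x := by
    intro x y
    have h := hcomm (α.symm x) (α.symm y)
    rw [α.apply_symm_apply, α.apply_symm_apply, ← fab, ← fab] at h
    exact h
  have C : ∀ x y v, ρ (β x) (ρ y v) = ρ (β y) (ρ x v) := by
    intro x y v
    have e1 := h3 (α.symm (β x)) y v
    have e2 := h3 (α.symm (β y)) x v
    rw [α.apply_symm_apply] at e1 e2
    rw [← e1, ← e2, hswap]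
  have core : ∀ x w b, ρ x (ρ w (ν.symm b)) = ρ (β w) (ν.symm (ρ x b)) := by
    intro x w b
    apply ν.injective
    rw [← h2, ← h2, ← h2, ν.apply_symm_apply, ν.apply_symm_apply]
    exact C x (β w) b
  have Lb : ∀ x z b, ρ (α x) (ρ (α.symm (β z)) (γ (ν.symm b)))
      = ρ (α.symm (β (β z))) (γ (ν.symm (ρ x b))) := by
    intro x z b
    have s1 : ρ (α.symm (β z)) (γ (ν.symm b))
        = γ (ρ (α.symm (α.symm (β z))) (ν.symm b)) := by
      rw [← h1, α.apply_symm_apply]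
    rw [s1, h1, core, ← h1, hαβ, α.apply_symm_apply]
    simp only [fab]
  have La : ∀ y z a, ρ (α.symm (β (μ y z))) (γ (ν.symm (γ a)))
      = ρ (α.symm (β (β z))) (γ (ν.symm (ρ (α.symm (β y)) (γ (ν.symm a))))) := by
    intro y z a
    rw [hβμ, fam]
    rw [show γ (ν.symm (γ a)) = ν (ν.symm (γ (ν.symm (γ a)))) from (ν.apply_symm_apply _).symm]
    rw [h3, α.apply_symm_apply]
    rw [fab y, f2', ← h1, α.apply_symm_apply]
    rw [show α.symm (β (β z)) = β (α.symm (β z)) from fab (β z)]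
    rw [C (α.symm (β z)) y]
    simp only [fgn]
  refine ⟨?_, ?_, ?_, ?_, ?_⟩
  · intro p
    simp only [hαt, hβt, Prod.mk.injEq]
    exact ⟨hαβ _, hγν _⟩
  · intro p q
    simp only [hμP, hαt, Prod.mk.injEq]
    refine ⟨hαμ _ _, ?_⟩
    rw [map_add, ← h1, ← h1, α.apply_symm_apply, ← hαβ, α.symm_apply_apply, fgn]
  · intro p q
    simp only [hμP, hβt, Prod.mk.injEq]
    refine ⟨hβμ _ _, ?_⟩
    rw [map_add, ← h2, ← h2, ← hγν, ν.apply_symm_apply, ν.symm_apply_apply]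
    simp only [fab]
  · intro p q r
    simp only [hμP, hαt, hβt, Prod.mk.injEq]
    refine ⟨hassoc _ _ _, ?_⟩
    simp only [map_add]
    rw [h3, Lb, La]
    abel
  · intro p q
    simp only [hμP, hβt, hαt, Prod.mk.injEq]
    refine ⟨hcomm _ _, ?_⟩
    simp only [ν.symm_apply_apply, ← hαβ, α.symm_apply_apply]
    exact add_comm _ _
end

section
/- Let (A, μ) be an admissible Poisson algebra and α, β: A → A two commuting algebra morphisms of (A, μ). Define μ_{α,β}(x,y) = μ(α(x), β(y)). Then (A, μ_{α,β}, α, β) is an admissible BiHom-Poisson algebra, i.e., it satisfies μ_{α,β}(μ_{α,β}(β(x),α(y)), α²β(z)) − μ_{α,β}(αβ(x), μ_{α,β}(α(y), α²(z))) = (1/3)[μ_{α,β}(μ_{α,β}(β(x), αβ(z)), α²(y)) − μ_{α,β}(μ_{α,β}(β²(z), α(x)), α²(y)) + μ_{α,β}(μ_{α,β}(β(y), αβ(z)), α²(x)) − μ_{α,β}(μ_{α,β}(β(y), α(x)), α²β(z))]. -/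
/-- Twisting an admissible Poisson algebra by two commuting algebra morphisms
yields an admissible BiHom-Poisson algebra. -/
theorem stmt_12 {K A : Type*} [Field K] [CharZero K] [AddCommGroup A] [Module K A]
    (μ : A →ₗ[K] A →ₗ[K] A)
    -- (A, μ) is an admissible Poisson algebra
    (hadm : ∀ x y z, μ (μ x y) z - μ x (μ y z) =
      (3 : K)⁻¹ • (μ (μ x z) y - μ (μ z x) y + μ (μ y z) x - μ (μ y x) z))
    -- α, β commuting algebra morphisms
    (α β : A →ₗ[K] A)
    (hαβ : ∀ x, α (β x) = β (α x))
    (hαμ : ∀ x y, α (μ x y) = μ (α x) (α y)) (hβμ : ∀ x y, β (μ x y) = μ (β x) (β y))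
    -- twisted product
    (m : A → A → A) (hm : ∀ x y, m x y = μ (α x) (β y)) :
    ∀ x y z,
      m (m (β x) (α y)) (α (α (β z))) - m (α (β x)) (m (α y) (α (α z))) =
      (3 : K)⁻¹ • (m (m (β x) (α (β z))) (α (α y)) - m (m (β (β z)) (α x)) (α (α y))
        + m (m (β y) (α (β z))) (α (α x)) - m (m (β y) (α x)) (α (α (β z)))) := by
  intro x y z
  simp only [hm, hαμ, hβμ, hαβ]
  exact hadm (β (α (α x))) (β (α (α y))) (β (β (α (α z))))
end

section
/- Let (A, μ, α, β) be a regular BiHom-algebra (α, β bijective, commuting, and multiplicative with respect to μ) and suppose the polarization P(A) = (A, {·,·}, •, α, β), where {x,y} = (1/2)(μ(x,y) − μ(α⁻¹β(y), αβ⁻¹(x))) and x•y = (1/2)(μ(x,y) + μ(α⁻¹β(y), αβ⁻¹(x))), is a BiHom-Poisson algebra. Then (A, μ, α, β) is an admissible BiHom-Poisson algebra, i.e., the BiHom-associator satisfies μ(μ(β(x),α(y)), α²β(z)) − μ(αβ(x), μ(α(y), α²(z))) = (1/3)[μ(μ(β(x), αβ(z)), α²(y)) − μ(μ(β²(z), α(x)),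 α²(y)) + μ(μ(β(y), αβ(z)), α²(x)) − μ(μ(β(y), α(x)), α²β(z))]. -/
/-- If the polarization P(A) of a regular BiHom-algebra (A, μ, α, β) is a
BiHom-Poisson algebra, then A is an admissible BiHom-Poisson algebra. -/
theorem stmt_13 {K A : Type*} [Field K] [CharZero K] [AddCommGroup A] [Module K A]
    (μ : A →ₗ[K] A →ₗ[K] A) (α β : A ≃ₗ[K] A)
    (hαβ : ∀ x, α (β x) = β (α x))
    (hαμ : ∀ x y, α (μ x y) = μ (α x) (α y)) (hβμ : ∀ x y, β (μ x y) = μ (β x) (β y))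
    -- polarization
    (br dot : A → A → A)
    (hbr : ∀ x y, br x y = (2 : K)⁻¹ • (μ x y - μ (α.symm (β y)) (α (β.symm x))))
    (hdot : ∀ x y, dot x y = (2 : K)⁻¹ • (μ x y + μ (α.symm (β y)) (α (β.symm x))))
    -- P(A) is a BiHom-Poisson algebra
    (hαl : ∀ x y, α (br x y) = br (α x) (α y)) (hβl : ∀ x y, β (br x y) = br (β x) (β y))
    (hskew : ∀ x y, br (β x) (α y) = - br (β y) (α x))
    (hjac : ∀ x y z, br (β (β x)) (br (β y) (α z)) + br (β (β y)) (br (β z) (α x))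
        + br (β (β z)) (br (β x) (α y)) = 0)
    (hαd : ∀ x y, α (dot x y) = dot (α x) (α y)) (hβd : ∀ x y, β (dot x y) = dot (β x) (β y))
    (hassoc : ∀ x y z, dot (α x) (dot y z) = dot (dot x y) (β z))
    (hcomm : ∀ x y, dot (β x) (α y) = dot (β y) (α x))
    (hleib : ∀ x y z, br (dot x y) (α (β z)) = dot (br x (β z)) (α y) + dot (α x) (br y (α z))) :
    -- admissibility identity for (A, μ, α, β)
    ∀ x y z,
      μ (μ (β x) (α y)) (α (α (β z))) - μ (α (β x)) (μ (α y) (α (α z))) =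
      (3 : K)⁻¹ • (μ (μ (β x) (α (β z))) (α (α y)) - μ (μ (β (β z)) (α x)) (α (α y))
        + μ (μ (β y) (α (β z))) (α (α x)) - μ (μ (β y) (α x)) (α (α (β z)))) := by
  have cab' : ∀ t, α (β.symm t) = β.symm (α t) := fun t => by
    apply β.injective
    rw [← hαβ, LinearEquiv.apply_symm_apply, LinearEquiv.apply_symm_apply]
  have ca'b : ∀ t, α.symm (β t) = β (α.symm t) := fun t => by
    apply α.injective
    rw [LinearEquiv.apply_symm_apply, hαβ, LinearEquiv.apply_symm_apply]
  have ca'b' : ∀ t, α.symm (β.symm t) = β.symm (α.symm t) := fun t => by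
    apply α.injective
    rw [LinearEquiv.apply_symm_apply, cab', LinearEquiv.apply_symm_apply]
  have hα'μ : ∀ u v, α.symm (μ u v) = μ (α.symm u) (α.symm v) := fun u v => by
    apply α.injective
    rw [LinearEquiv.apply_symm_apply, hαμ, LinearEquiv.apply_symm_apply,
      LinearEquiv.apply_symm_apply]
  have hβ'μ : ∀ u v, β.symm (μ u v) = μ (β.symm u) (β.symm v) := fun u v => by
    apply β.injective
    rw [LinearEquiv.apply_symm_apply, hβμ, LinearEquiv.apply_symm_apply,
      LinearEquiv.apply_symm_apply]
  intro x y z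
  have h1 := hassoc (β x) (α y) (α (α z))
  have h2 := hjac (α (β.symm x)) (α (β.symm y)) (α z)
  have h3 := hleib (β x) (α y) (α z)
  have h4 := hleib (β y) (α (β z)) (α (β.symm x))
  simp only [hbr, hdot, map_add, map_sub, map_smul, LinearMap.add_apply, LinearMap.sub_apply,
    LinearMap.smul_apply, hαμ, hβμ, hα'μ, hβ'μ, hαβ, cab', ca'b, ca'b',
    LinearEquiv.apply_symm_apply, LinearEquiv.symm_apply_apply] at h1 h2 h3 h4 ⊢
  linear_combination (norm := module) (-(4 : K)/3) • h1 + (-(2 : K)/3) • h2 +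
    ((4 : K)/3) • h3 + ((2 : K)/3) • h4
end

section
/- Let (A, μ, α, β) be a regular admissible BiHom-Poisson algebra. Then its polarization P(A) = (A, {·,·}, •, α, β), where {x,y} = (1/2)(μ(x,y) − μ(α⁻¹β(y), αβ⁻¹(x))) and x•y = (1/2)(μ(x,y) + μ(α⁻¹β(y), αβ⁻¹(x))), is a BiHom-Poisson algebra. -/
/-- The polarization of a regular admissible BiHom-Poisson algebra is a
BiHom-Poisson algebra. -/
theorem stmt_14 {K A : Type*} [Field K] [CharZero K] [AddCommGroup A] [Module K A]
    (μ : A →ₗ[K] A →ₗ[K] A) (α β : A ≃ₗ[K] A)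
    (hαβ : ∀ x, α (β x) = β (α x))
    (hαμ : ∀ x y, α (μ x y) = μ (α x) (α y)) (hβμ : ∀ x y, β (μ x y) = μ (β x) (β y))
    -- admissibility identity
    (hadm : ∀ x y z,
      μ (μ (β x) (α y)) (α (α (β z))) - μ (α (β x)) (μ (α y) (α (α z))) =
      (3 : K)⁻¹ • (μ (μ (β x) (α (β z))) (α (α y)) - μ (μ (β (β z)) (α x)) (α (α y))
        + μ (μ (β y) (α (β z))) (α (α x)) - μ (μ (β y) (α x)) (α (α (β z)))))
    -- polarization
    (br dot : A → A → A)
    (hbr : ∀ x y, br x y = (2 : K)⁻¹ • (μ x y - μ (α.symm (β y)) (α (β.symm x))))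
    (hdot : ∀ x y, dot x y = (2 : K)⁻¹ • (μ x y + μ (α.symm (β y)) (α (β.symm x)))) :
    -- P(A) is a BiHom-Poisson algebra
    (∀ x y, α (br x y) = br (α x) (α y)) ∧
    (∀ x y, β (br x y) = br (β x) (β y)) ∧
    (∀ x y, br (β x) (α y) = - br (β y) (α x)) ∧
    (∀ x y z, br (β (β x)) (br (β y) (α z)) + br (β (β y)) (br (β z) (α x))
        + br (β (β z)) (br (β x) (α y)) = 0) ∧
    (∀ x y, α (dot x y) = dot (α x) (α y)) ∧
    (∀ x y, β (dot x y) = dot (β x) (β y)) ∧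
    (∀ x y z, dot (α x) (dot y z) = dot (dot x y) (β z)) ∧
    (∀ x y, dot (β x) (α y) = dot (β y) (α x)) ∧
    (∀ x y z, br (dot x y) (α (β z)) = dot (br x (β z)) (α y) + dot (α x) (br y (α z))) := by
  -- inverse maps are also multiplicative / commuting
  have hαμ' : ∀ x y, α.symm (μ x y) = μ (α.symm x) (α.symm y) := by
    intro x y
    apply α.injective
    rw [α.apply_symm_apply, hαμ, α.apply_symm_apply, α.apply_symm_apply]
  have hβμ' : ∀ x y, β.symm (μ x y) = μ (β.symm x) (β.symm y) := by
    intro x y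
    apply β.injective
    rw [β.apply_symm_apply, hβμ, β.apply_symm_apply, β.apply_symm_apply]
  have h1 : ∀ x, α.symm (β x) = β (α.symm x) := by
    intro x
    apply α.injective
    rw [α.apply_symm_apply, hαβ, α.apply_symm_apply]
  have h2 : ∀ x, α (β.symm x) = β.symm (α x) := by
    intro x
    apply β.injective
    rw [β.apply_symm_apply, ← hαβ, β.apply_symm_apply]
  have h3 : ∀ x, α.symm (β.symm x) = β.symm (α.symm x) := by
    intro x
    apply α.injective
    rw [α.apply_symm_apply, h2, α.apply_symm_apply]
  refine ⟨?_, ?_, ?_, ?_, ?_, ?_, ?_, ?_, ?_⟩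
  · intro x y
    simp only [hbr, map_smul, map_sub, map_add, LinearMap.sub_apply, LinearMap.add_apply,
      LinearMap.smul_apply, hαμ, hβμ, hαμ', hβμ', hαβ, h1, h2, h3,
      LinearEquiv.apply_symm_apply, LinearEquiv.symm_apply_apply]
  · intro x y
    simp only [hbr, map_smul, map_sub, map_add, LinearMap.sub_apply, LinearMap.add_apply,
      LinearMap.smul_apply, hαμ, hβμ, hαμ', hβμ', hαβ, h1, h2, h3,
      LinearEquiv.apply_symm_apply, LinearEquiv.symm_apply_apply]
  · intro x y
    simp only [hbr, map_smul, map_sub, map_add, LinearMap.sub_apply, LinearMap.add_apply,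
      LinearMap.smul_apply, hαμ, hβμ, hαμ', hβμ', hαβ, h1, h2, h3,
      LinearEquiv.apply_symm_apply, LinearEquiv.symm_apply_apply]
    module
  · intro x y z
    have e1 := hadm (α.symm (β x)) (α.symm (β y)) (α.symm z)
    have e2 := hadm (α.symm (β x)) (α.symm (β z)) (α.symm y)
    have e3 := hadm (α.symm (β y)) (α.symm (β x)) (α.symm z)
    have e4 := hadm (α.symm (β y)) (α.symm (β z)) (α.symm x)
    have e5 := hadm (α.symm (β z)) (α.symm (β x)) (α.symm y)
    have e6 := hadm (α.symm (β z)) (α.symm (β y)) (α.symm x)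
    simp only [hbr, hdot, map_smul, map_sub, map_add, LinearMap.sub_apply, LinearMap.add_apply,
      LinearMap.smul_apply, hαμ, hβμ, hαμ', hβμ', hαβ, h1, h2, h3,
      LinearEquiv.apply_symm_apply, LinearEquiv.symm_apply_apply] at e1 e2 e3 e4 e5 e6 ⊢
    linear_combination (norm := module)
      (-(4:K)⁻¹) • e1 + (4:K)⁻¹ • e2 + (4:K)⁻¹ • e3 +
      (-(4:K)⁻¹) • e4 + (-(4:K)⁻¹) • e5 + (4:K)⁻¹ • e6
  · intro x y
    simp only [hdot, map_smul, map_sub, map_add, LinearMap.sub_apply, LinearMap.add_apply,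
      LinearMap.smul_apply, hαμ, hβμ, hαμ', hβμ', hαβ, h1, h2, h3,
      LinearEquiv.apply_symm_apply, LinearEquiv.symm_apply_apply]
  · intro x y
    simp only [hdot, map_smul, map_sub, map_add, LinearMap.sub_apply, LinearMap.add_apply,
      LinearMap.smul_apply, hαμ, hβμ, hαμ', hβμ', hαβ, h1, h2, h3,
      LinearEquiv.apply_symm_apply, LinearEquiv.symm_apply_apply]
  · intro x y z
    have e1 := hadm (β.symm x) (α.symm y) (α.symm (α.symm z))
    have e2 := hadm (β.symm x) (α.symm (α.symm (β z))) (α.symm (β.symm y))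
    have e3 := hadm (α.symm (α.symm (β z))) (β.symm x) (α.symm (β.symm y))
    have e4 := hadm (α.symm (α.symm (β z))) (α.symm y) (β.symm (β.symm x))
    simp only [hbr, hdot, map_smul, map_sub, map_add, LinearMap.sub_apply, LinearMap.add_apply,
      LinearMap.smul_apply, hαμ, hβμ, hαμ', hβμ', hαβ, h1, h2, h3,
      LinearEquiv.apply_symm_apply, LinearEquiv.symm_apply_apply] at e1 e2 e3 e4 ⊢
    linear_combination (norm := module)
      (-(4:K)⁻¹) • e1 + (-(4:K)⁻¹) • e2 + (4:K)⁻¹ • e3 + (4:K)⁻¹ • e4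
  · intro x y
    simp only [hdot, map_smul, map_sub, map_add, LinearMap.sub_apply, LinearMap.add_apply,
      LinearMap.smul_apply, hαμ, hβμ, hαμ', hβμ', hαβ, h1, h2, h3,
      LinearEquiv.apply_symm_apply, LinearEquiv.symm_apply_apply]
    module
  · intro x y z
    have e1 := hadm (β.symm x) (α.symm y) (α.symm z)
    have e2 := hadm (β.symm x) (α.symm (β z)) (α.symm (β.symm y))
    have e3 := hadm (α.symm y) (β.symm x) (α.symm z)
    have e4 := hadm (α.symm y) (α.symm (β z)) (β.symm (β.symm x))
    have e5 := hadm (α.symm (β z)) (β.symm x) (α.symm (β.symm y))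
    have e6 := hadm (α.symm (β z)) (α.symm y) (β.symm (β.symm x))
    simp only [hbr, hdot, map_smul, map_sub, map_add, LinearMap.sub_apply, LinearMap.add_apply,
      LinearMap.smul_apply, hαμ, hβμ, hαμ', hβμ', hαβ, h1, h2, h3,
      LinearEquiv.apply_symm_apply, LinearEquiv.symm_apply_apply] at e1 e2 e3 e4 e5 e6 ⊢
    linear_combination (norm := module)
      (4:K)⁻¹ • e1 + (-(4:K)⁻¹) • e2 + (4:K)⁻¹ • e3 +
      (-(4:K)⁻¹) • e4 + (4:K)⁻¹ • e5 + (4:K)⁻¹ • e6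
end

section
/- Let (A, [·,·], α, β) be a BiHom-Lie algebra with α bijective. Then the BiHom-Jacobi identity is equivalent to the identity [β²(x), [β(y), α(z)]] = [[α⁻¹β²(x), β(y)], αβ(z)] + [β²(y), [β(x), α(z)]] for all x, y, z ∈ A. -/
/-- For a BiHom-Lie-type bracket with α bijective (commuting maps, multiplicative,
BiHom-skew-symmetric), the BiHom-Jacobi identity is equivalent to
[β²(x), [β(y), α(z)]] = [[α⁻¹β²(x), β(y)], αβ(z)] + [β²(y), [β(x), α(z)]]. -/
theorem stmt_18 {K A : Type*} [Field K] [CharZero K] [AddCommGroup A] [Module K A]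
    (l : A →ₗ[K] A →ₗ[K] A) (α : A ≃ₗ[K] A) (β : A →ₗ[K] A)
    (hαβ : ∀ x, α (β x) = β (α x))
    (hαl : ∀ x y, α (l x y) = l (α x) (α y)) (hβl : ∀ x y, β (l x y) = l (β x) (β y))
    (hskew : ∀ x y, l (β x) (α y) = - l (β y) (α x)) :
    (∀ x y z, l (β (β x)) (l (β y) (α z)) + l (β (β y)) (l (β z) (α x))
        + l (β (β z)) (l (β x) (α y)) = 0) ↔
    (∀ x y z, l (β (β x)) (l (β y) (α z)) =
        l (l (α.symm (β (β x))) (β y)) (α (β z)) + l (β (β y)) (l (β x) (α z))) := by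
  have hβα : ∀ x, α.symm (β x) = β (α.symm x) := by
    intro x
    apply α.injective
    rw [hαβ, α.apply_symm_apply]
    rw [α.apply_symm_apply]
  have key : ∀ x y z, l (l (α.symm (β (β x))) (β y)) (α (β z))
      = - l (β (β z)) (l (β x) (α y)) := by
    intro x y z
    rw [hβα, ← hβl, hskew, hαl, α.apply_symm_apply]
  constructor
  · intro H x y z
    have H' := H x y z
    rw [key, hskew x z, map_neg]
    rw [add_assoc, add_eq_zero_iff_eq_neg] at H'
    rw [H']
    abel
  · intro P x y z
    have h := P x y z
    rw [key, hskew x z, map_neg] at h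
    rw [h]
    abel
end
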